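/- Let π be an (n,m)-piecewise affine permutation with principal product P ≡ 1 (mod n) and principal sum S. Then for every x ∈ [1,n] divisible by m, the length of the cycle of π containing x equals m·n/gcd(n, S). -/

import Mathlib

/-- `psi k x` is the representative of `x` mod `k` in `[1, k]`. -/
def psi (k x : ℕ) : ℕ := if x % k = 0 then k else x % k

/-- `π` is an `(n,m)`-piecewise affine permutation of `[1,n]` with parameters
`(a, b, c)`: it permutes `[1,n]` (and is the identity elsewhere), the entries of
`a, b` lie in `[1,n]`, the entries of `c` form a permutation of `[1,m]`, and for
`x ∈ [1,n]` with `Ψ_m(x) = c_i` one has `π(x) = Ψ_n(a_i x + b_i)` and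
`Ψ_m(π(x)) = c_{i+1}`, indices cyclic modulo `m`. -/
def IsPAP (n m : ℕ) [NeZero m] (a b c : Fin m → ℕ) (π : ℕ → ℕ) : Prop :=
  Set.BijOn π (Set.Icc 1 n) (Set.Icc 1 n) ∧
  (∀ x : ℕ, x ∉ Set.Icc 1 n → π x = x) ∧
  (∀ i, a i ∈ Set.Icc 1 n) ∧ (∀ i, b i ∈ Set.Icc 1 n) ∧
  (∀ i, c i ∈ Set.Icc 1 m) ∧ Function.Injective c ∧
  ∀ x ∈ Set.Icc 1 n, ∀ i, psi m x = c i →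
    π x = psi n (a i * x + b i) ∧ psi m (π x) = c (i + 1)

/-! Since `c` is a permutation of `[1,m]` whose index advances by one at each step of `π`, every
period of a point of `[1,n]` is a multiple of `m`, so the cycle length of `x` is `m` times its
period under `π^[m]`. That map preserves the multiples of `m` in `[1,n]`, and there, read in
`ZMod n`, it is the translation `y ↦ P * y + S = y + S`. Its period is therefore the additive
order of `S` in `ZMod n`, namely `n / gcd n S`. -/

theorem psi_mod (k x : ℕ) : psi k x % k = x % k := by
  unfold psi
  split_ifs with h
  · simp [h]
  · exact Nat.mod_mod x k

theorem natCast_psi (k x : ℕ) : ((psi k x : ℕ) : ZMod k) = x :=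
  (ZMod.natCast_eq_natCast_iff' _ _ _).2 (psi_mod k x)

theorem psi_mem {k : ℕ} (hk : 0 < k) (x : ℕ) : psi k x ∈ Set.Icc 1 k := by
  unfold psi
  split_ifs with h
  · exact ⟨hk, le_rfl⟩
  · exact ⟨Nat.one_le_iff_ne_zero.2 h, (Nat.mod_lt x hk).le⟩

theorem psi_eq_self {k x : ℕ} (hx : x ∈ Set.Icc 1 k) : psi k x = x := by
  obtain ⟨h1, h2⟩ := hx
  unfold psi
  rcases h2.eq_or_lt with rfl | hlt
  · simp
  · rw [Nat.mod_eq_of_lt hlt, if_neg (by omega)]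

theorem psi_eq_left_iff_dvd {k x : ℕ} (hk : 0 < k) : psi k x = k ↔ k ∣ x := by
  unfold psi
  split_ifs with h
  · simp [Nat.dvd_of_mod_eq_zero h]
  · simp only [Nat.dvd_iff_mod_eq_zero, h, iff_false]
    exact (Nat.mod_lt x hk).ne

theorem ZMod.natCast_injOn_Icc (k : ℕ) : Set.InjOn (Nat.cast : ℕ → ZMod k) (Set.Icc 1 k) := by
  intro x hx y hy hxy
  rw [← psi_eq_self hx, ← psi_eq_self hy]
  unfold psi
  rw [(ZMod.natCast_eq_natCast_iff' _ _ _).1 hxy]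

theorem Function.minimalPeriod_eq_addOrderOf_of_semiconjOn {α G : Type*} [AddMonoid G]
    [IsLeftCancelAdd G] {f : α → α} {s : Set α} {φ : α → G} {g : G} (hf : Set.MapsTo f s s)
    (hφ : Set.InjOn φ s) (hfg : ∀ y ∈ s, φ (f y) = φ y + g) {x : α} (hx : x ∈ s) :
    minimalPeriod f x = addOrderOf g := by
  have hφ_iterate : ∀ k, φ (f^[k] x) = φ x + k • g := by
    intro k
    induction k with
    | zero => simp
    | succ k ih =>
      rw [iterate_succ_apply', hfg _ (hf.iterate k hx), ih, succ_nsmul, add_assoc]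
  refine Nat.dvd_right_iff_eq.1 fun k => ?_
  rw [← isPeriodicPt_iff_minimalPeriod_dvd, addOrderOf_dvd_iff_nsmul_eq_zero, ← add_eq_left,
    ← hφ_iterate]
  exact ⟨congrArg φ, fun h => hφ (hf.iterate k hx) hx h⟩

namespace IsPAP

variable {n m : ℕ} [NeZero m] {a b c : Fin m → ℕ} {π : ℕ → ℕ}

theorem exists_eq (h : IsPAP n m a b c π) {r : ℕ} (hr : r ∈ Set.Icc 1 m) : ∃ i, c i = r := by
  obtain ⟨-, -, -, -, hc, hc_inj, -⟩ := h
  obtain ⟨i, -, hi⟩ := Finset.surjOn_of_injOn_of_card_le (s := Finset.univ)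
    (t := Finset.Icc 1 m) c (fun i _ => by simpa using hc i) hc_inj.injOn (by simp)
    (by simpa using hr)
  exact ⟨i, hi⟩

open Fin.NatCast in
theorem psi_iterate (h : IsPAP n m a b c π) {x : ℕ} (hx : x ∈ Set.Icc 1 n) {i : Fin m}
    (hi : psi m x = c i) (j : ℕ) : psi m (π^[j] x) = c (i + j) := by
  obtain ⟨hbij, -, -, -, -, -, hstep⟩ := h
  induction j with
  | zero => simpa using hi
  | succ j ih =>
    rw [Function.iterate_succ_apply', (hstep _ (hbij.mapsTo.iterate j hx) _ ih).2,
      Nat.cast_succ, add_assoc]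

open Fin.NatCast in
theorem dvd_of_isPeriodicPt (h : IsPAP n m a b c π) {x : ℕ} (hx : x ∈ Set.Icc 1 n) {j : ℕ}
    (hj : Function.IsPeriodicPt π j x) : m ∣ j := by
  obtain ⟨i, hi⟩ := h.exists_eq (psi_mem (NeZero.pos m) x)
  have hij : c (i + j) = c i := by rw [← h.psi_iterate hx hi.symm, hj.eq, hi]
  obtain ⟨-, -, -, -, -, hc_inj, -⟩ := h
  simpa using hc_inj hij

theorem minimalPeriod_eq_mul (h : IsPAP n m a b c π) {x : ℕ} (hx : x ∈ Set.Icc 1 n) :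
    Function.minimalPeriod π x = m * Function.minimalPeriod π^[m] x := by
  have hm := h.dvd_of_isPeriodicPt hx (Function.isPeriodicPt_minimalPeriod π x)
  rw [Function.minimalPeriod_iterate_eq_div_gcd (NeZero.ne m), Nat.gcd_eq_right hm,
    Nat.mul_div_cancel' hm]

theorem psi_iterate_self (h : IsPAP n m a b c π) {x : ℕ} (hx : x ∈ Set.Icc 1 n) :
    psi m (π^[m] x) = psi m x := by
  obtain ⟨i, hi⟩ := h.exists_eq (psi_mem (NeZero.pos m) x)
  rw [h.psi_iterate hx hi.symm, Fin.natCast_self, add_zero, hi]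

theorem mapsTo_iterate_multiples (h : IsPAP n m a b c π) :
    Set.MapsTo π^[m] {x | x ∈ Set.Icc 1 n ∧ m ∣ x} {x | x ∈ Set.Icc 1 n ∧ m ∣ x} := by
  rintro x ⟨hx, hmx⟩
  refine ⟨h.1.mapsTo.iterate m hx, ?_⟩
  rw [← psi_eq_left_iff_dvd (NeZero.pos m), h.psi_iterate_self hx]
  exact (psi_eq_left_iff_dvd (NeZero.pos m)).2 hmx

end IsPAP

theorem pap_cycle_length_P_one_general (n m : ℕ) [NeZero m]
    (a b c : Fin m → ℕ) (π : ℕ → ℕ) (hpap : IsPAP n m a b c π)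
    (P S : ℕ)
    (hS : ∀ x ∈ Set.Icc 1 n, m ∣ x → π^[m] x = psi n (P * x + S))
    (hP1 : P ≡ 1 [MOD n]) :
    ∀ x ∈ Set.Icc 1 n, m ∣ x →
      Function.minimalPeriod π x = m * (n / Nat.gcd n S) := by
  intro x hx hmx
  have hP_one : (P : ZMod n) = 1 := by
    rw [← Nat.cast_one, ZMod.natCast_eq_natCast_iff]
    exact hP1
  have translate : ∀ y ∈ {y | y ∈ Set.Icc 1 n ∧ m ∣ y},
      ((π^[m] y : ℕ) : ZMod n) = y + S := by
    rintro y ⟨hy, hmy⟩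
    rw [hS y hy hmy, natCast_psi, Nat.cast_add, Nat.cast_mul, hP_one, one_mul]
  rw [hpap.minimalPeriod_eq_mul hx,
    Function.minimalPeriod_eq_addOrderOf_of_semiconjOn hpap.mapsTo_iterate_multiples
      ((ZMod.natCast_injOn_Icc n).mono fun y hy => hy.1) translate ⟨hx, hmx⟩,
    ZMod.addOrderOf_coe S (Nat.one_le_iff_ne_zero.1 (hx.1.trans hx.2))]

/-- If the principal product satisfies `P ≡ 1 (mod n)`, the cycle of `π`
containing a multiple `x` of `m` has length `m·n/gcd(n,S)`. -/
theorem pap_cycle_length_P_one (n m : ℕ) [NeZero m] (hm : 1 < m) (hmn : m ∣ n)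
    (a b c : Fin m → ℕ) (π : ℕ → ℕ) (hpap : IsPAP n m a b c π)
    (P S : ℕ) (hP : P = ∏ i, a i) (hSmem : S ∈ Set.Icc 1 n)
    (hS : ∀ x ∈ Set.Icc 1 n, m ∣ x → π^[m] x = psi n (P * x + S))
    (hP1 : P ≡ 1 [MOD n]) :
    ∀ x ∈ Set.Icc 1 n, m ∣ x →
      Function.minimalPeriod π x = m * (n / Nat.gcd n S) :=
  pap_cycle_length_P_one_general n m a b c π hpap P S hS hP1
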